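/- Let T : ℓ^∞(ℤ) → ℓ^∞(ℤ) be the backward bilateral weighted shift with weights α_n = 2 for n ≥ 1 and α_n = 1 for n ≤ 0 (so (Tx)(n) = α_{n+1} x(n+1)), and let y = e_0 be the unit vector with y(0) = 1 and y(n) = 0 otherwise. Then J(y,T) = ∅: there exists no w ∈ ℓ^∞(ℤ) such that there are y_n → y in ℓ^∞ and a strictly increasing sequence of positive integers (k_n) with T^{k_n} y_n → w. -/
import Mathlib


open Filter Topology

/-- The extended limit set `J(y,T)` on `ℓ^∞(ℤ)`. -/
def jSetLinf (T : lp (fun _ : ℤ => ℂ) ⊤ →L[ℂ] lp (fun _ : ℤ => ℂ) ⊤)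
    (y : lp (fun _ : ℤ => ℂ) ⊤) : Set (lp (fun _ : ℤ => ℂ) ⊤) :=
  {w | ∃ k : ℕ → ℕ, StrictMono k ∧ (∀ n, 0 < k n) ∧
    ∃ u : ℕ → lp (fun _ : ℤ => ℂ) ⊤, Tendsto u atTop (𝓝 y) ∧
      Tendsto (fun n => (T ^ k n) (u n)) atTop (𝓝 w)}

/-- The weight sequence: `α n = 2` for `n ≥ 1` and `α n = 1` for `n ≤ 0`. -/
noncomputable def shiftWeight (n : ℤ) : ℂ := if 1 ≤ n then 2 else 1

theorem jSet_empty_for_bilateral_shift_on_linf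
    (T : lp (fun _ : ℤ => ℂ) ⊤ →L[ℂ] lp (fun _ : ℤ => ℂ) ⊤)
    (hT : ∀ (a : lp (fun _ : ℤ => ℂ) ⊤) (n : ℤ),
      (T a) n = shiftWeight (n + 1) * a (n + 1))
    (y : lp (fun _ : ℤ => ℂ) ⊤)
    (hy : ∀ n : ℤ, y n = if n = 0 then 1 else 0) :
    jSetLinf T y = ∅ := by
  ext w
  simp only [Set.mem_empty_iff_false, iff_false]
  rintro ⟨k, hk, _hkpos, u, hu, huw⟩
  -- For coordinates far to the left, powers of T act as an unweighted shift.
  have key : ∀ (m : ℕ) (x : lp (fun _ : ℤ => ℂ) ⊤) (j : ℤ),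
      j + m ≤ 0 → ((T ^ m) x) j = x (j + m) := by
    intro m
    induction m with
    | zero => intro x j _; simp
    | succ m ih =>
      intro x j hj
      have hpow : ((T ^ (m + 1)) x) j = ((T ^ m) (T x)) j := by
        rw [pow_succ]
        rfl
      have hj' : j + (m : ℤ) ≤ 0 := by push_cast at hj ⊢; omega
      rw [hpow, ih (T x) j hj', hT]
      have hw1 : shiftWeight (j + (m : ℤ) + 1) = 1 := by
        unfold shiftWeight
        rw [if_neg]
        push_cast at hj
        omega
      rw [hw1, one_mul]
      congr 1
      push_cast
      ring
  -- coordinatewise bound by the sup norm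
  have hcoe : ∀ (a b : lp (fun _ : ℤ => ℂ) ⊤) (i : ℤ), ‖a i - b i‖ ≤ ‖a - b‖ := by
    intro a b i
    have h := lp.norm_apply_le_norm (ENNReal.top_ne_zero) (a - b) i
    rwa [show ((a - b : lp (fun _ : ℤ => ℂ) ⊤) : ℤ → ℂ) i = a i - b i from
      congrFun (lp.coeFn_sub a b) i] at h
  obtain ⟨N1, hN1⟩ := Metric.tendsto_atTop.mp huw (1/8) (by norm_num)
  obtain ⟨N2, hN2⟩ := Metric.tendsto_atTop.mp hu (1/8) (by norm_num)
  set N := max N1 N2 with hN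
  have hclose : ∀ n, N ≤ n → ‖(T ^ k n) (u n) - w‖ < 1/8 ∧ ‖u n - y‖ < 1/8 := by
    intro n hn
    constructor
    · have := hN1 n (le_trans (le_max_left _ _) hn); rwa [dist_eq_norm] at this
    · have := hN2 n (le_trans (le_max_right _ _) hn); rwa [dist_eq_norm] at this
  -- (a) `‖w (-(k n))‖ ≥ 3/4` for all `n ≥ N`
  have ha : ∀ n, N ≤ n → (3:ℝ)/4 ≤ ‖w (-(k n : ℤ))‖ := by
    intro n hn
    obtain ⟨h1, h2⟩ := hclose n hn
    have hc : ((T ^ k n) (u n)) (-(k n : ℤ)) = u n 0 := by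
      have h := key (k n) (u n) (-(k n : ℤ)) (by simp)
      simpa using h
    have e1 : ‖((T ^ k n) (u n)) (-(k n : ℤ)) - w (-(k n : ℤ))‖
        ≤ ‖(T ^ k n) (u n) - w‖ := hcoe _ _ _
    rw [hc] at e1
    have e2 : ‖u n (0:ℤ) - y (0:ℤ)‖ ≤ ‖u n - y‖ := hcoe _ _ _
    have hy0 : y (0:ℤ) = 1 := by rw [hy]; simp
    rw [hy0] at e2
    have t1 : ‖(1:ℂ)‖ - ‖u n (0:ℤ)‖ ≤ ‖u n (0:ℤ) - 1‖ := by
      rw [norm_sub_rev]; exact norm_sub_norm_le _ _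
    have t2 : ‖u n (0:ℤ)‖ - ‖w (-(k n : ℤ))‖ ≤ ‖u n (0:ℤ) - w (-(k n : ℤ))‖ :=
      norm_sub_norm_le _ _
    have hone : ‖(1:ℂ)‖ = 1 := by norm_num
    linarith
  -- (b) `‖w (-(k (N+1)))‖ ≤ 1/4` using the approximation at index `N`
  obtain ⟨h1, h2⟩ := hclose N le_rfl
  have hkk : (k N : ℤ) < (k (N + 1) : ℤ) := by exact_mod_cast hk (Nat.lt_succ_self N)
  set j : ℤ := -(k (N + 1) : ℤ) with hj
  have hc : ((T ^ k N) (u N)) j = u N (j + k N) := key (k N) (u N) j (by omega)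
  have e1 : ‖((T ^ k N) (u N)) j - w j‖ ≤ ‖(T ^ k N) (u N) - w‖ := hcoe _ _ _
  rw [hc] at e1
  have e2 : ‖u N (j + k N) - y (j + k N)‖ ≤ ‖u N - y‖ := hcoe _ _ _
  have hyj : y (j + k N) = 0 := by rw [hy]; rw [if_neg]; omega
  rw [hyj, sub_zero] at e2
  have t2 : ‖w j‖ - ‖u N (j + k N)‖ ≤ ‖w j - u N (j + k N)‖ := norm_sub_norm_le _ _
  rw [norm_sub_rev] at t2
  have hb := ha (N + 1) (Nat.le_succ N)
  rw [← hj] at hb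
  linarith
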